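/- Let ÷ be an AGM contraction operator with contraction-compatible faithful assignment Ψ ↦ ≤_Ψ. Then ÷ satisfies (IC4_sa): if Ψ ÷ α ÷ β ⊨ ¬α then Ψ ÷ β ⊨ ¬α, if and only if the assignment satisfies: whenever ω₁ ⊨ ¬α, ω₂ ⊨ α, and [[Ψ]] ⊆ [[¬α]], then ω₁ <_{Ψ÷α} ω₂ implies ω₁ <_Ψ ω₂. -/

import Mathlib

inductive Form (V : Type) : Type
  | var : V → Form V
  | falsum : Form V
  | imp : Form V → Form V → Form V

namespace Form

def eval {V : Type} (w : V → Bool) : Form V → Bool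
  | var v => w v
  | falsum => false
  | imp a b => !(eval w a) || eval w b

def neg {V : Type} (a : Form V) : Form V := imp a falsum

def top {V : Type} : Form V := neg falsum

def conj {V : Type} (a b : Form V) : Form V := neg (imp a (neg b))

end Form

/-- Worlds (propositional interpretations) over the signature `V`. -/
abbrev World (V : Type) := V → Bool

/-- Models of a single formula. -/
def FMod {V : Type} (a : Form V) : Set (World V) := {w | a.eval w = true}

/-- Models of a set of formulas. -/
def SMod {V : Type} (X : Set (Form V)) : Set (World V) := {w | ∀ a ∈ X, a.eval w = true}

/-- Deductive closure (consequence operator). -/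
def Cn {V : Type} (X : Set (Form V)) : Set (Form V) := {b | ∀ w ∈ SMod X, b.eval w = true}

/-- Minimal elements of a set of worlds w.r.t. a relation. -/
def minSet {V : Type} (S : Set (World V)) (r : World V → World V → Prop) : Set (World V) :=
  {w ∈ S | ∀ w' ∈ S, r w w'}

/-- Total preorder: total (hence reflexive) and transitive. -/
def TotalPre {V : Type} (r : World V → World V → Prop) : Prop :=
  (∀ x y, r x y ∨ r y x) ∧ (∀ x y z, r x y → r y z → r x z)

/-- A belief change operator over epistemic states `E`: each state has a
deductively closed belief set, and the operator maps a state and a formula to a state. -/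
structure BCO (V E : Type) where
  Bel : E → Set (Form V)
  closed : ∀ Ψ, Cn (Bel Ψ) = Bel Ψ
  op : E → Form V → E

/-- Models of (the belief set of) an epistemic state. -/
def stMod {V E : Type} (O : BCO V E) (Ψ : E) : Set (World V) := SMod (O.Bel Ψ)

/-- Faithful assignment: each `le Ψ` is a total preorder; models of `Ψ` are mutually
equivalent and strictly below non-models. -/
def Faithful {V E : Type} (O : BCO V E) (le : E → World V → World V → Prop) : Prop :=
  (∀ Ψ, TotalPre (le Ψ)) ∧
  (∀ Ψ w₁ w₂, w₁ ∈ stMod O Ψ → w₂ ∈ stMod O Ψ → le Ψ w₁ w₂) ∧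
  (∀ Ψ w₁ w₂, w₁ ∈ stMod O Ψ → w₂ ∉ stMod O Ψ → (le Ψ w₁ w₂ ∧ ¬ le Ψ w₂ w₁))

/-- Contraction-compatibility: `[[Ψ ÷ α]] = [[Ψ]] ∪ min([[¬α]], ≤_Ψ)`. -/
def ContrCompat {V E : Type} (O : BCO V E) (le : E → World V → World V → Prop) : Prop :=
  ∀ Ψ (α : Form V), stMod O (O.op Ψ α) = stMod O Ψ ∪ minSet (FMod α.neg) (le Ψ)

/-- Revision-compatibility: `[[Ψ * α]] = min([[α]], ≤_Ψ)`. -/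
def RevCompat {V E : Type} (O : BCO V E) (le : E → World V → World V → Prop) : Prop :=
  ∀ Ψ (α : Form V), stMod O (O.op Ψ α) = minSet (FMod α) (le Ψ)

/-- The AGM contraction postulates (C1)–(C7) for epistemic states. -/
def AGMContr {V E : Type} (O : BCO V E) : Prop :=
  (∀ Ψ α, O.Bel (O.op Ψ α) ⊆ O.Bel Ψ) ∧
  (∀ Ψ α, α ∉ O.Bel Ψ → O.Bel Ψ ⊆ O.Bel (O.op Ψ α)) ∧
  (∀ Ψ (α : Form V), ¬ (∀ w, w ∈ FMod α) → α ∉ O.Bel (O.op Ψ α)) ∧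
  (∀ Ψ α, O.Bel Ψ ⊆ Cn (O.Bel (O.op Ψ α) ∪ {α})) ∧
  (∀ Ψ α β, FMod α = FMod β → O.Bel (O.op Ψ α) = O.Bel (O.op Ψ β)) ∧
  (∀ Ψ (α β : Form V), O.Bel (O.op Ψ α) ∩ O.Bel (O.op Ψ β) ⊆ O.Bel (O.op Ψ (α.conj β))) ∧
  (∀ Ψ (α β : Form V), β ∉ O.Bel (O.op Ψ (α.conj β)) → O.Bel (O.op Ψ (α.conj β)) ⊆ O.Bel (O.op Ψ β))

/-- Unbiasedness: every consistent set of formulas has an epistemic state whose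
belief set is its deductive closure. -/
def Unbiased {V E : Type} (O : BCO V E) : Prop :=
  ∀ L : Set (Form V), (SMod L).Nonempty → ∃ Ψ : E, O.Bel Ψ = Cn L


open Set

section Semantics

variable {V : Type}

lemma FMod_neg (a : Form V) : FMod a.neg = (FMod a)ᶜ := by
  ext w
  simp [FMod, Form.neg, Form.eval]

lemma FMod_imp (a b : Form V) : FMod (a.imp b) = (FMod a)ᶜ ∪ FMod b := by
  ext w
  simp [FMod, Form.eval]

lemma FMod_conj (a b : Form V) : FMod (a.conj b) = FMod a ∩ FMod b := by
  rw [Form.conj, FMod_neg, FMod_imp, FMod_neg, compl_union, compl_compl, compl_compl]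

lemma FMod_falsum : FMod (Form.falsum : Form V) = ∅ := by
  ext w
  simp [FMod, Form.eval]

lemma FMod_var (v : V) : FMod (Form.var v) = {w : World V | w v = true} := rfl

variable (V) in
def definableSets : BooleanSubalgebra (Set (World V)) where
  carrier := range FMod
  supClosed' := by
    rintro _ ⟨a, rfl⟩ _ ⟨b, rfl⟩
    exact ⟨a.neg.imp b, by rw [FMod_imp, FMod_neg, compl_compl]; rfl⟩
  infClosed' := by
    rintro _ ⟨a, rfl⟩ _ ⟨b, rfl⟩
    exact ⟨a.conj b, FMod_conj a b⟩
  compl_mem' := by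
    rintro _ ⟨a, rfl⟩
    exact ⟨a.neg, FMod_neg a⟩
  bot_mem' := ⟨Form.falsum, FMod_falsum⟩

lemma setOf_apply_eq_mem_definableSets (v : V) (b : Bool) :
    {w : World V | w v = b} ∈ definableSets V := by
  cases b
  · exact ⟨(Form.var v).neg, by ext w; simp [FMod_neg, FMod_var]⟩
  · exact ⟨Form.var v, FMod_var v⟩

lemma singleton_mem_definableSets [Finite V] (w : World V) : {w} ∈ definableSets V := by
  have hw : ({w} : Set (World V)) = ⋂ v, {u | u v = w v} := by
    ext u
    simp [funext_iff]
  rw [hw]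
  exact (definableSets V).infClosed.iInf_mem (definableSets V).top_mem
    fun v => setOf_apply_eq_mem_definableSets v (w v)

theorem exists_FMod_eq [Finite V] (S : Set (World V)) : ∃ φ : Form V, FMod φ = S := by
  have hS : S = ⋃ w ∈ S, {w} := (biUnion_of_singleton S).symm
  rw [hS]
  exact (definableSets V).supClosed.biSup_mem S.toFinite (definableSets V).bot_mem
    fun w _ => singleton_mem_definableSets w

end Semantics

section MinimalWorlds

variable {V : Type} {r : World V → World V → Prop}

lemma TotalPre.refl (hr : TotalPre r) (x : World V) : r x x :=
  (hr.1 x x).elim id id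

lemma minSet_pair_eq_singleton (hrefl : ∀ x, r x x) {a b : World V} (hab : r a b)
    (hba : ¬ r b a) : minSet {a, b} r = {a} := by
  ext w
  simp only [minSet, mem_ofPred_eq, mem_insert_iff, mem_singleton_iff, forall_eq_or_imp,
    forall_eq]
  constructor
  · rintro ⟨rfl | rfl, hwa, -⟩
    · rfl
    · exact absurd hwa hba
  · rintro rfl
    exact ⟨Or.inl rfl, hrefl w, hab⟩

lemma mem_minSet_pair_right (hrefl : ∀ x, r x x) {a b : World V} (hba : r b a) :
    b ∈ minSet {a, b} r :=
  ⟨mem_insert_of_mem a rfl, by rintro x (rfl | rfl); exacts [hba, hrefl x]⟩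

lemma mem_minSet_of_le (htrans : ∀ x y z, r x y → r y z → r x z) {S : Set (World V)}
    {w m : World V} (hw : w ∈ S) (hm : m ∈ minSet S r) (hwm : r w m) : w ∈ minSet S r :=
  ⟨hw, fun x hx => htrans w m x hwm (hm.2 x hx)⟩

lemma minSet_nonempty [Finite V] (hr : TotalPre r) {S : Set (World V)} (hS : S.Nonempty) :
    (minSet S r).Nonempty := by
  let lt : World V → World V → Prop := fun x y => r x y ∧ ¬ r y x
  have : IsTrans (World V) lt :=
    ⟨fun x y z hxy hyz => ⟨hr.2 x y z hxy.1 hyz.1, fun hzx => hyz.2 (hr.2 z x y hzx hxy.1)⟩⟩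
  have : Std.Irrefl lt := ⟨fun x hx => hx.2 hx.1⟩
  obtain ⟨m, hm, hmin⟩ := (Finite.wellFounded_of_trans_of_irrefl lt).has_min S hS
  exact ⟨m, hm, fun x hx => (hr.1 m x).elim id fun hxm => not_not.1 fun h => hmin x hx ⟨hxm, h⟩⟩

end MinimalWorlds

section Contraction

variable {V E : Type} {O : BCO V E} {le : E → World V → World V → Prop}

lemma mem_Bel_iff_stMod_subset {Ψ : E} {φ : Form V} : φ ∈ O.Bel Ψ ↔ stMod O Ψ ⊆ FMod φ :=
  ⟨fun h _ hw => hw φ h, fun h => O.closed Ψ ▸ fun _ hw => h hw⟩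

lemma mem_Bel_op_iff (hC : ContrCompat O le) {Ψ : E} {φ β : Form V} :
    φ ∈ O.Bel (O.op Ψ β) ↔ stMod O Ψ ⊆ FMod φ ∧ minSet (FMod β.neg) (le Ψ) ⊆ FMod φ := by
  rw [mem_Bel_iff_stMod_subset, hC, union_subset_iff]

lemma neg_mem_Bel_op_op_iff (hC : ContrCompat O le) {Ψ : E} {α β : Form V} :
    α.neg ∈ O.Bel (O.op (O.op Ψ α) β) ↔
      stMod O Ψ ⊆ FMod α.neg ∧ minSet (FMod β.neg) (le (O.op Ψ α)) ⊆ FMod α.neg := by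
  rw [mem_Bel_op_iff hC, hC, union_subset_iff]
  exact ⟨fun ⟨⟨hΨ, _⟩, hβ⟩ => ⟨hΨ, hβ⟩, fun ⟨hΨ, hβ⟩ => ⟨⟨hΨ, fun _ hw => hw.1⟩, hβ⟩⟩

variable (O) in
def IC4sa : Prop :=
  ∀ (Ψ : E) (α β : Form V), α.neg ∈ O.Bel (O.op (O.op Ψ α) β) → α.neg ∈ O.Bel (O.op Ψ β)

variable (O le) in
def IC4RelWeak : Prop :=
  ∀ (Ψ : E) (α : Form V) (ω₁ ω₂ : World V),
    ω₁ ∈ FMod α.neg → ω₂ ∈ FMod α → stMod O Ψ ⊆ FMod α.neg →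
      (le (O.op Ψ α) ω₁ ω₂ ∧ ¬ le (O.op Ψ α) ω₂ ω₁) → (le Ψ ω₁ ω₂ ∧ ¬ le Ψ ω₂ ω₁)

-- Test (IC4_sa) on a `β` with `[[¬β]] = {ω₁, ω₂}`: `ω₂` is then not `≤_Ψ`-minimal in `[[¬β]]`.
theorem ic4RelWeak_of_ic4sa [Finite V] (hF : Faithful O le) (hC : ContrCompat O le)
    (h : IC4sa O) : IC4RelWeak O le := by
  intro Ψ α ω₁ ω₂ h₁ h₂ hΨ ⟨hle₁₂, hnle₂₁⟩
  obtain ⟨β, hβ⟩ := exists_FMod_eq ({ω₁, ω₂}ᶜ : Set (World V))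
  have hβneg : FMod β.neg = {ω₁, ω₂} := by rw [FMod_neg, hβ, compl_compl]
  have hmin : minSet (FMod β.neg) (le (O.op Ψ α)) = {ω₁} := by
    rw [hβneg]
    exact minSet_pair_eq_singleton (hF.1 _).refl hle₁₂ hnle₂₁
  have hpre : α.neg ∈ O.Bel (O.op (O.op Ψ α) β) :=
    (neg_mem_Bel_op_op_iff hC).2 ⟨hΨ, by rwa [hmin, singleton_subset_iff]⟩
  have hpost := ((mem_Bel_op_iff hC).1 (h Ψ α β hpre)).2
  have hnle : ¬ le Ψ ω₂ ω₁ := fun hle => by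
    have hmem := hpost (hβneg ▸ mem_minSet_pair_right (hF.1 Ψ).refl hle)
    rw [FMod_neg] at hmem
    exact hmem h₂
  exact ⟨((hF.1 Ψ).1 ω₁ ω₂).resolve_right hnle, hnle⟩

-- A `≤_{Ψ÷α}`-minimal `¬β`-world `ω'` satisfies `¬α`; if it were strictly below an `α`-world
-- `ω`, (IC4ʳᵉˡ_weak) would put it strictly below `ω` for `≤_Ψ` as well.
theorem ic4sa_of_ic4RelWeak [Finite V] (hF : Faithful O le) (hC : ContrCompat O le)
    (h : IC4RelWeak O le) : IC4sa O := by
  intro Ψ α β hpre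
  obtain ⟨hΨ, hmin⟩ := (neg_mem_Bel_op_op_iff hC).1 hpre
  refine (mem_Bel_op_iff hC).2 ⟨hΨ, fun ω hω => ?_⟩
  by_contra hωα
  have hωα' : ω ∈ FMod α := by rwa [FMod_neg, mem_compl_iff, not_not] at hωα
  obtain ⟨ω', hω'⟩ := minSet_nonempty (hF.1 (O.op Ψ α)) ⟨ω, hω.1⟩
  have hle : le (O.op Ψ α) ω ω' := by
    by_contra hnle
    have hlt := h Ψ α ω' ω (hmin hω') hωα' hΨ ⟨((hF.1 _).1 _ _).resolve_left hnle, hnle⟩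
    exact hlt.2 (hω.2 ω' hω'.1)
  exact hωα (hmin (mem_minSet_of_le (hF.1 _).2 hω.1 hω' hle))

end Contraction

theorem stmt_13_general {V E : Type} [Fintype V] (O : BCO V E)
    (le : E → World V → World V → Prop)
    (hF : Faithful O le) (hC : ContrCompat O le) :
    (∀ (Ψ : E) (α β : Form V),
        α.neg ∈ O.Bel (O.op (O.op Ψ α) β) → α.neg ∈ O.Bel (O.op Ψ β)) ↔
    (∀ (Ψ : E) (α : Form V) (ω₁ ω₂ : World V),
        ω₁ ∈ FMod α.neg → ω₂ ∈ FMod α → stMod O Ψ ⊆ FMod α.neg →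
          (le (O.op Ψ α) ω₁ ω₂ ∧ ¬ le (O.op Ψ α) ω₂ ω₁) →
            (le Ψ ω₁ ω₂ ∧ ¬ le Ψ ω₂ ω₁)) :=
  ⟨ic4RelWeak_of_ic4sa hF hC, ic4sa_of_ic4RelWeak hF hC⟩

/-- (IC4_sa) holds iff the assignment satisfies (IC4ʳᵉˡ_weak). -/
theorem stmt_13 {V E : Type} [Fintype V] (O : BCO V E)
    (le : E → World V → World V → Prop)
    (hA : AGMContr O) (hF : Faithful O le) (hC : ContrCompat O le) :
    (∀ (Ψ : E) (α β : Form V),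
        α.neg ∈ O.Bel (O.op (O.op Ψ α) β) → α.neg ∈ O.Bel (O.op Ψ β)) ↔
    (∀ (Ψ : E) (α : Form V) (ω₁ ω₂ : World V),
        ω₁ ∈ FMod α.neg → ω₂ ∈ FMod α → stMod O Ψ ⊆ FMod α.neg →
          (le (O.op Ψ α) ω₁ ω₂ ∧ ¬ le (O.op Ψ α) ω₂ ω₁) →
            (le Ψ ω₁ ω₂ ∧ ¬ le Ψ ω₂ ω₁)) :=
  stmt_13_general O le hF hC
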